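/- arXiv:0810.3327 — 3 statements merged into one kernel-verified Lean document; each statement's English description precedes it below -/
import Mathlib

section
/- For integers k, l, m ≥ 1 with max(l,m) ≤ k ≤ l·m, the number of injective functions f from {1,…,k} to the cell set {1,…,l} × {1,…,m} such that every row index in {1,…,l} and every column index in {1,…,m} occurs as a coordinate of some cell in the image of f, equals l! · m! · c^{(k)}_{l,m}. (Such fillings are the k-conjoint ranking tables of size l × m.) -/
open Nat

/-- Unsigned Stirling numbers of the first kind: the number of permutations of
`n` elements with exactly `p` cycles. -/
def stirling1 : ℕ → ℕ → ℕ
  | 0, 0 => 1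
  | 0, _ + 1 => 0
  | _ + 1, 0 => 0
  | n + 1, p + 1 => n * stirling1 n (p + 1) + stirling1 n p

/-- Stirling numbers of the second kind: the number of partitions of an
`n`-element set into `p` nonempty blocks (`stirling2 p l = 0` when `p < l`). -/
def stirling2 : ℕ → ℕ → ℕ
  | 0, 0 => 1
  | 0, _ + 1 => 0
  | _ + 1, 0 => 0
  | n + 1, p + 1 => (p + 1) * stirling2 n (p + 1) + stirling2 n p

/-- The coefficients `c^(k)_{l,m} = ∑_{p=1}^k (-1)^(k-p) s(k,p) S(p,l) S(p,m)`. -/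
def c (k l m : ℕ) : ℤ :=
  ∑ p ∈ Finset.Icc 1 k,
    (-1 : ℤ) ^ (k - p) * (stirling1 k p : ℤ) * (stirling2 p l : ℤ) * (stirling2 p m : ℤ)


lemma stirling1_succ_zero (n : ℕ) : stirling1 (n+1) 0 = 0 := rfl
lemma stirling2_succ_zero (n : ℕ) : stirling2 (n+1) 0 = 0 := rfl

lemma stirling1_eq_zero_of_lt : ∀ {n p : ℕ}, n < p → stirling1 n p = 0
  | 0, _ + 1, _ => rfl
  | n + 1, p + 1, h => by
    have h1 : n < p := Nat.lt_of_succ_lt_succ h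
    show n * stirling1 n (p + 1) + stirling1 n p = 0
    rw [stirling1_eq_zero_of_lt (h1.trans (Nat.lt_succ_self p)),
      stirling1_eq_zero_of_lt h1, Nat.mul_zero]

lemma stirling2_eq_zero_of_lt : ∀ {n p : ℕ}, n < p → stirling2 n p = 0
  | 0, _ + 1, _ => rfl
  | n + 1, p + 1, h => by
    have h1 : n < p := Nat.lt_of_succ_lt_succ h
    show (p + 1) * stirling2 n (p + 1) + stirling2 n p = 0
    rw [stirling2_eq_zero_of_lt (h1.trans (Nat.lt_succ_self p)),
      stirling2_eq_zero_of_lt h1, Nat.mul_zero]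

lemma sum_if_subset_sign {α : Type*} [Fintype α] [DecidableEq α] (s : Finset α) :
    ∑ A : Finset α, (if s ⊆ A then ((-1:ℤ))^(Aᶜ.card) else 0)
      = if s = Finset.univ then 1 else 0 := by
  have hcc : ∀ C : Finset α, C ⊆ sᶜ ↔ s ⊆ Cᶜ := by
    intro C
    constructor
    · intro h x hx
      rw [Finset.mem_compl]
      intro hxC
      exact Finset.mem_compl.1 (h hxC) hx
    · intro h x hx
      rw [Finset.mem_compl]
      intro hxs
      exact Finset.mem_compl.1 (h hxs) hx
  have hbij : Function.Bijective (fun A : Finset α => Aᶜ) :=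
    Function.Involutive.bijective (fun A => compl_compl A)
  rw [← Fintype.sum_bijective _ hbij
      (fun C : Finset α => if C ⊆ sᶜ then ((-1:ℤ))^(C.card) else 0) _
      (fun C => by simp only [compl_compl]; exact if_congr (hcc C) rfl rfl)]
  have hfil : Finset.univ.filter (fun C : Finset α => C ⊆ sᶜ) = sᶜ.powerset := by
    ext C; simp [Finset.mem_powerset]
  rw [← Finset.sum_filter, hfil, Finset.sum_powerset_neg_one_pow_card]
  simp [Finset.compl_eq_empty_iff]

lemma descFactorial_succ_cast (n q : ℕ) :
    ((n.descFactorial (q+1) : ℤ)) = ((n:ℤ) - q) * (n.descFactorial q : ℤ) := by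
  rcases le_or_gt q n with h | h
  · rw [Nat.descFactorial_succ]
    push_cast [h]
    ring
  · rw [Nat.descFactorial_of_lt h, Nat.descFactorial_of_lt (h.trans (Nat.lt_succ_self q))]
    simp

lemma stirling1_succ_succ (n p : ℕ) :
    stirling1 (n+1) (p+1) = n * stirling1 n (p + 1) + stirling1 n p := rfl
lemma stirling2_succ_succ (n p : ℕ) :
    stirling2 (n+1) (p+1) = (p + 1) * stirling2 n (p + 1) + stirling2 n p := rfl

lemma stirling1_zero_right : ∀ k : ℕ, (k : ℤ) * (stirling1 k 0 : ℤ) = 0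
  | 0 => by simp
  | k + 1 => by rw [show stirling1 (k+1) 0 = 0 from rfl]; simp

lemma descFactorial_eq_sum_stirling1 (k n : ℕ) :
    ((n.descFactorial k : ℤ)) =
      ∑ p ∈ Finset.range (k+1), (-1:ℤ)^(k+p) * (stirling1 k p : ℤ) * (n:ℤ)^p := by
  induction k with
  | zero => simp [stirling1]
  | succ k ih =>
    have haux : (k:ℤ) * ∑ p ∈ Finset.range (k+1),
          (-1:ℤ)^(k+p) * (stirling1 k (p+1) : ℤ) * (n:ℤ)^(p+1)
        = -((k:ℤ) * ∑ p ∈ Finset.range (k+1),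
          (-1:ℤ)^(k+p) * (stirling1 k p : ℤ) * (n:ℤ)^p) := by
      rw [Finset.sum_range_succ (fun p => (-1:ℤ)^(k+p) * (stirling1 k (p+1) : ℤ) * (n:ℤ)^(p+1)),
        stirling1_eq_zero_of_lt (Nat.lt_succ_self k),
        Finset.sum_range_succ' (fun p => (-1:ℤ)^(k+p) * (stirling1 k p : ℤ) * (n:ℤ)^p)]
      push_cast
      simp only [mul_zero, zero_mul, add_zero, pow_zero, mul_one]
      rw [mul_add, mul_left_comm, stirling1_zero_right k, mul_zero, add_zero, ← neg_mul]
      rw [Finset.mul_sum, Finset.mul_sum]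
      refine Finset.sum_congr rfl fun p _ => ?_
      rw [show k+(p+1) = (k+p)+1 by ring, pow_succ]
      ring
    rw [descFactorial_succ_cast, ih]
    rw [Finset.sum_range_succ' (fun p => (-1:ℤ)^(k+1+p) * (stirling1 (k+1) p : ℤ) * (n:ℤ)^p)]
    simp only [stirling1_succ_succ]
    rw [show stirling1 (k+1) 0 = 0 from rfl]
    push_cast
    simp only [mul_zero, zero_mul, add_zero, pow_zero, mul_one, Nat.cast_zero]
    have expand : ∑ p ∈ Finset.range (k+1),
        (-1:ℤ)^(k+1+(p+1)) * ((k:ℤ) * (stirling1 k (p+1) : ℤ) + (stirling1 k p : ℤ)) * (n:ℤ)^(p+1)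
        = ((k:ℤ) * ∑ p ∈ Finset.range (k+1), (-1:ℤ)^(k+p) * (stirling1 k (p+1) : ℤ) * (n:ℤ)^(p+1))
          + ∑ p ∈ Finset.range (k+1), (-1:ℤ)^(k+p) * (stirling1 k p : ℤ) * (n:ℤ)^(p+1) := by
      rw [Finset.mul_sum, ← Finset.sum_add_distrib]
      refine Finset.sum_congr rfl fun p _ => ?_
      have h2 : (-1:ℤ)^(k+1+(p+1)) = (-1:ℤ)^(k+p) := by
        rw [show k+1+(p+1) = (k+p)+2 by ring, pow_add]
        norm_num
      rw [h2]; ring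
    rw [expand, haux]
    have h1 : (n:ℤ) * ∑ p ∈ Finset.range (k+1), (-1:ℤ)^(k+p) * (stirling1 k p : ℤ) * (n:ℤ)^p
        = ∑ p ∈ Finset.range (k+1), (-1:ℤ)^(k+p) * (stirling1 k p : ℤ) * (n:ℤ)^(p+1) := by
      rw [Finset.mul_sum]
      exact Finset.sum_congr rfl fun p _ => by rw [pow_succ]; ring
    rw [sub_mul, h1]
    ring

lemma pow_eq_sum_stirling2 (p n : ℕ) :
    ((n:ℤ))^p = ∑ q ∈ Finset.range (p+1), (stirling2 p q : ℤ) * (n.descFactorial q : ℤ) := by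
  induction p with
  | zero => simp [stirling2]
  | succ p ih =>
    have key : ∀ q : ℕ, (n:ℤ) * (n.descFactorial q : ℤ)
        = (n.descFactorial (q+1) : ℤ) + (q:ℤ) * (n.descFactorial q : ℤ) := by
      intro q; rw [descFactorial_succ_cast]; ring
    have haux : ∑ q ∈ Finset.range (p+1), (q:ℤ) * (stirling2 p q : ℤ) * (n.descFactorial q : ℤ)
        = ∑ q ∈ Finset.range (p+1),
            ((q:ℤ)+1) * (stirling2 p (q+1) : ℤ) * (n.descFactorial (q+1) : ℤ) := by
      rw [Finset.sum_range_succ' (fun q => (q:ℤ) * (stirling2 p q : ℤ) * (n.descFactorial q : ℤ)),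
        Finset.sum_range_succ (fun q => ((q:ℤ)+1) * (stirling2 p (q+1) : ℤ) * (n.descFactorial (q+1) : ℤ)),
        stirling2_eq_zero_of_lt (Nat.lt_succ_self p)]
      push_cast
      simp only [Nat.cast_zero, zero_mul, add_zero, mul_zero, zero_add]
    calc ((n:ℤ))^(p+1) = (n:ℤ) * (n:ℤ)^p := by ring
      _ = ∑ q ∈ Finset.range (p+1), (stirling2 p q : ℤ) * ((n:ℤ) * (n.descFactorial q : ℤ)) := by
          rw [ih, Finset.mul_sum]
          exact Finset.sum_congr rfl fun q _ => by ring
      _ = (∑ q ∈ Finset.range (p+1), (stirling2 p q : ℤ) * (n.descFactorial (q+1) : ℤ))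
          + ∑ q ∈ Finset.range (p+1), (q:ℤ) * (stirling2 p q : ℤ) * (n.descFactorial q : ℤ) := by
          rw [← Finset.sum_add_distrib]
          exact Finset.sum_congr rfl fun q _ => by rw [key q]; ring
      _ = ∑ q ∈ Finset.range (p+2), (stirling2 (p+1) q : ℤ) * (n.descFactorial q : ℤ) := by
          rw [haux,
            Finset.sum_range_succ' (fun q => (stirling2 (p+1) q : ℤ) * (n.descFactorial q : ℤ)),
            show stirling2 (p+1) 0 = 0 from rfl, ← Finset.sum_add_distrib]
          push_cast
          simp only [mul_zero, zero_mul, add_zero, Nat.cast_zero]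
          refine Finset.sum_congr rfl fun q _ => ?_
          rw [stirling2_succ_succ]
          push_cast
          ring

lemma sum_sign_descFactorial (l q : ℕ) :
    ∑ A : Finset (Fin l), (-1:ℤ)^(Aᶜ.card) * (A.card.descFactorial q : ℤ)
      = if q = l then ((l)! : ℤ) else 0 := by
  classical
  have hchoose : ∀ A : Finset (Fin l), ((A.card.choose q : ℕ) : ℤ)
      = ∑ S ∈ Finset.powersetCard q (Finset.univ : Finset (Fin l)),
          (if S ⊆ A then (1:ℤ) else 0) := by
    intro A
    have hset : Finset.powersetCard q A
        = (Finset.powersetCard q (Finset.univ : Finset (Fin l))).filter (· ⊆ A) := by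
      ext S
      simp only [Finset.mem_powersetCard, Finset.mem_filter, Finset.subset_univ, true_and]
      tauto
    have : A.card.choose q = ∑ S ∈ Finset.powersetCard q (Finset.univ : Finset (Fin l)),
        (if S ⊆ A then 1 else 0) := by
      rw [← Finset.card_powersetCard q A, hset, Finset.card_filter]
    rw [this]
    push_cast [apply_ite (Nat.cast : ℕ → ℤ)]
    rfl
  calc ∑ A : Finset (Fin l), (-1:ℤ)^(Aᶜ.card) * (A.card.descFactorial q : ℤ)
      = (q ! : ℤ) * ∑ A : Finset (Fin l), ∑ S ∈ Finset.powersetCard q (Finset.univ : Finset (Fin l)),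
          (if S ⊆ A then (-1:ℤ)^(Aᶜ.card) else 0) := by
        rw [Finset.mul_sum]
        refine Finset.sum_congr rfl fun A _ => ?_
        rw [Nat.descFactorial_eq_factorial_mul_choose]
        push_cast
        rw [hchoose A, Finset.mul_sum, Finset.mul_sum, Finset.mul_sum]
        refine Finset.sum_congr rfl fun S _ => ?_
        by_cases h : S ⊆ A <;> simp [h] <;> ring
    _ = (q ! : ℤ) * ∑ S ∈ Finset.powersetCard q (Finset.univ : Finset (Fin l)),
          ∑ A : Finset (Fin l), (if S ⊆ A then (-1:ℤ)^(Aᶜ.card) else 0) := by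
        rw [Finset.sum_comm]
    _ = (q ! : ℤ) * ∑ S ∈ Finset.powersetCard q (Finset.univ : Finset (Fin l)),
          (if S = Finset.univ then (1:ℤ) else 0) := by
        rw [Finset.sum_congr rfl fun S _ => sum_if_subset_sign S]
    _ = if q = l then ((l)! : ℤ) else 0 := by
        rw [Finset.sum_ite_eq' (Finset.powersetCard q (Finset.univ : Finset (Fin l)))
          (Finset.univ : Finset (Fin l)) (fun _ => (1:ℤ))]
        simp only [Finset.mem_powersetCard, Finset.subset_univ, true_and, Finset.card_univ,
          Fintype.card_fin]
        by_cases h : l = q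
        · subst h; simp
        · rw [if_neg h, if_neg (fun hh => h hh.symm), mul_zero]

lemma sum_sign_pow (l p : ℕ) :
    ∑ A : Finset (Fin l), (-1:ℤ)^(Aᶜ.card) * ((A.card : ℤ))^p
      = ((l)! : ℤ) * (stirling2 p l : ℤ) := by
  classical
  calc ∑ A : Finset (Fin l), (-1:ℤ)^(Aᶜ.card) * ((A.card : ℤ))^p
      = ∑ A : Finset (Fin l), ∑ q ∈ Finset.range (p+1),
          (stirling2 p q : ℤ) * ((-1:ℤ)^(Aᶜ.card) * (A.card.descFactorial q : ℤ)) := by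
        refine Finset.sum_congr rfl fun A _ => ?_
        rw [pow_eq_sum_stirling2 p A.card, Finset.mul_sum]
        exact Finset.sum_congr rfl fun q _ => by ring
    _ = ∑ q ∈ Finset.range (p+1), (stirling2 p q : ℤ) *
          ∑ A : Finset (Fin l), (-1:ℤ)^(Aᶜ.card) * (A.card.descFactorial q : ℤ) := by
        rw [Finset.sum_comm]
        exact Finset.sum_congr rfl fun q _ => by rw [Finset.mul_sum]
    _ = ∑ q ∈ Finset.range (p+1), (if q = l then (stirling2 p q : ℤ) * ((l)! : ℤ) else 0) := by
        refine Finset.sum_congr rfl fun q _ => ?_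
        rw [sum_sign_descFactorial l q]
        by_cases h : q = l <;> simp [h]
    _ = ((l)! : ℤ) * (stirling2 p l : ℤ) := by
        rw [Finset.sum_ite_eq' (Finset.range (p+1)) l (fun q => (stirling2 p q : ℤ) * ((l)! : ℤ))]
        by_cases h : l ∈ Finset.range (p+1)
        · rw [if_pos h]; ring
        · rw [if_neg h, stirling2_eq_zero_of_lt (by simpa using h)]
          simp

lemma card_filter_inj_mem {k l m : ℕ} (A : Finset (Fin l)) (B : Finset (Fin m)) :
    (Finset.univ.filter (fun f : Fin k → Fin l × Fin m =>
        Function.Injective f ∧ (∀ i, (f i).1 ∈ A) ∧ (∀ i, (f i).2 ∈ B))).card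
      = (A.card * B.card).descFactorial k := by
  classical
  rw [← Fintype.card_subtype]
  have e : {f : Fin k → Fin l × Fin m //
      Function.Injective f ∧ (∀ i, (f i).1 ∈ A) ∧ (∀ i, (f i).2 ∈ B)} ≃
      (Fin k ↪ ((A ×ˢ B : Finset (Fin l × Fin m)) : Type)) :=
    { toFun := fun f => ⟨fun i => ⟨f.1 i, Finset.mem_product.2 ⟨f.2.2.1 i, f.2.2.2 i⟩⟩,
        fun i j h => f.2.1 (congrArg Subtype.val h)⟩
      invFun := fun g => ⟨fun i => (g i : Fin l × Fin m),
        ⟨fun i j h => g.injective (Subtype.ext h),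
         fun i => (Finset.mem_product.1 (g i).2).1,
         fun i => (Finset.mem_product.1 (g i).2).2⟩⟩
      left_inv := fun f => Subtype.ext rfl
      right_inv := fun g => DFunLike.ext _ _ fun i => Subtype.ext rfl }
  rw [Fintype.card_congr e, Fintype.card_embedding_eq, Fintype.card_coe, Fintype.card_fin,
    Finset.card_product]

/-- The number of `k`-conjoint ranking tables of size `l × m` is `l! m! c^(k)_{l,m}`:
such a table is an injective placement of `1,…,k` into the cells of an `l × m` array
hitting every row and every column. -/
theorem conjoint_ranking_count (k l m : ℕ) (hl : 1 ≤ l) (hm : 1 ≤ m)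
    (hmax : max l m ≤ k) (hklm : k ≤ l * m) :
    (Nat.card {f : Fin k → Fin l × Fin m //
        Function.Injective f ∧ (∀ a : Fin l, ∃ i, (f i).1 = a) ∧
          (∀ b : Fin m, ∃ i, (f i).2 = b)} : ℤ) =
      (l ! : ℤ) * (m ! : ℤ) * c k l m := by
  classical
  have hk : 1 ≤ k := le_trans (le_trans hl (le_max_left l m)) hmax
  rw [Nat.card_eq_fintype_card, Fintype.card_subtype]
  set I : Finset (Fin k → Fin l × Fin m) := Finset.univ.filter Function.Injective with hIdef
  -- row inner sum
  have h1 : ∀ f : Fin k → Fin l × Fin m,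
      (∑ A : Finset (Fin l), if (∀ i, (f i).1 ∈ A) then (-1:ℤ)^(Aᶜ.card) else 0)
        = if (∀ a : Fin l, ∃ i, (f i).1 = a) then 1 else 0 := by
    intro f
    calc (∑ A : Finset (Fin l), if (∀ i, (f i).1 ∈ A) then (-1:ℤ)^(Aᶜ.card) else 0)
        = ∑ A : Finset (Fin l),
            (if (Finset.univ.image (fun i => (f i).1)) ⊆ A then (-1:ℤ)^(Aᶜ.card) else 0) :=
          Finset.sum_congr rfl fun A _ =>
            if_congr (by simp [Finset.image_subset_iff]) rfl rfl
      _ = if (Finset.univ.image (fun i => (f i).1)) = Finset.univ then 1 else 0 :=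
          sum_if_subset_sign _
      _ = if (∀ a : Fin l, ∃ i, (f i).1 = a) then 1 else 0 :=
          if_congr (by simp [Finset.eq_univ_iff_forall]) rfl rfl
  have h2 : ∀ f : Fin k → Fin l × Fin m,
      (∑ B : Finset (Fin m), if (∀ i, (f i).2 ∈ B) then (-1:ℤ)^(Bᶜ.card) else 0)
        = if (∀ b : Fin m, ∃ i, (f i).2 = b) then 1 else 0 := by
    intro f
    calc (∑ B : Finset (Fin m), if (∀ i, (f i).2 ∈ B) then (-1:ℤ)^(Bᶜ.card) else 0)
        = ∑ B : Finset (Fin m),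
            (if (Finset.univ.image (fun i => (f i).2)) ⊆ B then (-1:ℤ)^(Bᶜ.card) else 0) :=
          Finset.sum_congr rfl fun B _ =>
            if_congr (by simp [Finset.image_subset_iff]) rfl rfl
      _ = if (Finset.univ.image (fun i => (f i).2)) = Finset.univ then 1 else 0 :=
          sum_if_subset_sign _
      _ = if (∀ b : Fin m, ∃ i, (f i).2 = b) then 1 else 0 :=
          if_congr (by simp [Finset.eq_univ_iff_forall]) rfl rfl
  have main : ((Finset.univ.filter (fun f : Fin k → Fin l × Fin m =>
        Function.Injective f ∧ (∀ a : Fin l, ∃ i, (f i).1 = a) ∧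
          (∀ b : Fin m, ∃ i, (f i).2 = b))).card : ℤ)
      = ∑ A : Finset (Fin l), ∑ B : Finset (Fin m),
          (-1:ℤ)^(Aᶜ.card) * (-1:ℤ)^(Bᶜ.card)
            * (((A.card * B.card).descFactorial k : ℕ) : ℤ) := by
    calc ((Finset.univ.filter (fun f : Fin k → Fin l × Fin m =>
            Function.Injective f ∧ (∀ a : Fin l, ∃ i, (f i).1 = a) ∧
              (∀ b : Fin m, ∃ i, (f i).2 = b))).card : ℤ)
        = ∑ f ∈ I, (if (∀ a : Fin l, ∃ i, (f i).1 = a) ∧ (∀ b : Fin m, ∃ i, (f i).2 = b)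
            then (1:ℤ) else 0) := by
          rw [← Finset.filter_filter, ← hIdef, Finset.card_filter]
          push_cast [apply_ite (Nat.cast : ℕ → ℤ)]
          rfl
      _ = ∑ f ∈ I,
            (∑ A : Finset (Fin l), if (∀ i, (f i).1 ∈ A) then (-1:ℤ)^(Aᶜ.card) else 0)
              * (∑ B : Finset (Fin m), if (∀ i, (f i).2 ∈ B) then (-1:ℤ)^(Bᶜ.card) else 0) := by
          refine Finset.sum_congr rfl fun f _ => ?_
          rw [h1 f, h2 f]
          by_cases hp : (∀ a : Fin l, ∃ i, (f i).1 = a) <;>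
            by_cases hq : (∀ b : Fin m, ∃ i, (f i).2 = b) <;> simp [hp, hq]
      _ = ∑ f ∈ I, ∑ A : Finset (Fin l), ∑ B : Finset (Fin m),
            (if (∀ i, (f i).1 ∈ A) then (-1:ℤ)^(Aᶜ.card) else 0)
              * (if (∀ i, (f i).2 ∈ B) then (-1:ℤ)^(Bᶜ.card) else 0) :=
          Finset.sum_congr rfl fun f _ => Finset.sum_mul_sum _ _ _ _
      _ = ∑ A : Finset (Fin l), ∑ f ∈ I, ∑ B : Finset (Fin m),
            (if (∀ i, (f i).1 ∈ A) then (-1:ℤ)^(Aᶜ.card) else 0)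
              * (if (∀ i, (f i).2 ∈ B) then (-1:ℤ)^(Bᶜ.card) else 0) := Finset.sum_comm
      _ = ∑ A : Finset (Fin l), ∑ B : Finset (Fin m), ∑ f ∈ I,
            (if (∀ i, (f i).1 ∈ A) then (-1:ℤ)^(Aᶜ.card) else 0)
              * (if (∀ i, (f i).2 ∈ B) then (-1:ℤ)^(Bᶜ.card) else 0) :=
          Finset.sum_congr rfl fun A _ => Finset.sum_comm
      _ = ∑ A : Finset (Fin l), ∑ B : Finset (Fin m),
            (-1:ℤ)^(Aᶜ.card) * (-1:ℤ)^(Bᶜ.card)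
              * (((A.card * B.card).descFactorial k : ℕ) : ℤ) := by
          refine Finset.sum_congr rfl fun A _ => Finset.sum_congr rfl fun B _ => ?_
          rw [← card_filter_inj_mem (k := k) A B, ← Finset.filter_filter, ← hIdef,
            Finset.card_filter]
          push_cast [apply_ite (Nat.cast : ℕ → ℤ)]
          rw [Finset.mul_sum]
          refine Finset.sum_congr rfl fun f _ => ?_
          by_cases hp : (∀ i, (f i).1 ∈ A) <;> by_cases hq : (∀ i, (f i).2 ∈ B) <;>
            simp [hp, hq]
  rw [main]
  -- now pure algebra
  have alg : ∑ A : Finset (Fin l), ∑ B : Finset (Fin m),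
      (-1:ℤ)^(Aᶜ.card) * (-1:ℤ)^(Bᶜ.card) * (((A.card * B.card).descFactorial k : ℕ) : ℤ)
      = ∑ p ∈ Finset.range (k+1), (-1:ℤ)^(k+p) * (stirling1 k p : ℤ)
          * (((l)! : ℤ) * (stirling2 p l : ℤ)) * (((m)! : ℤ) * (stirling2 p m : ℤ)) := by
    calc ∑ A : Finset (Fin l), ∑ B : Finset (Fin m),
        (-1:ℤ)^(Aᶜ.card) * (-1:ℤ)^(Bᶜ.card) * (((A.card * B.card).descFactorial k : ℕ) : ℤ)
        = ∑ A : Finset (Fin l), ∑ B : Finset (Fin m), ∑ p ∈ Finset.range (k+1),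
            (-1:ℤ)^(k+p) * (stirling1 k p : ℤ)
              * (((-1:ℤ)^(Aᶜ.card) * ((A.card : ℤ))^p) * ((-1:ℤ)^(Bᶜ.card) * ((B.card : ℤ))^p)) := by
          refine Finset.sum_congr rfl fun A _ => Finset.sum_congr rfl fun B _ => ?_
          rw [descFactorial_eq_sum_stirling1 k (A.card * B.card), Finset.mul_sum]
          refine Finset.sum_congr rfl fun p _ => ?_
          push_cast
          rw [mul_pow]
          ring
      _ = ∑ A : Finset (Fin l), ∑ p ∈ Finset.range (k+1), ∑ B : Finset (Fin m),
            (-1:ℤ)^(k+p) * (stirling1 k p : ℤ)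
              * (((-1:ℤ)^(Aᶜ.card) * ((A.card : ℤ))^p) * ((-1:ℤ)^(Bᶜ.card) * ((B.card : ℤ))^p)) :=
          Finset.sum_congr rfl fun A _ => Finset.sum_comm
      _ = ∑ p ∈ Finset.range (k+1), ∑ A : Finset (Fin l), ∑ B : Finset (Fin m),
            (-1:ℤ)^(k+p) * (stirling1 k p : ℤ)
              * (((-1:ℤ)^(Aᶜ.card) * ((A.card : ℤ))^p) * ((-1:ℤ)^(Bᶜ.card) * ((B.card : ℤ))^p)) :=
          Finset.sum_comm
      _ = ∑ p ∈ Finset.range (k+1), (-1:ℤ)^(k+p) * (stirling1 k p : ℤ)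
            * (((l)! : ℤ) * (stirling2 p l : ℤ)) * (((m)! : ℤ) * (stirling2 p m : ℤ)) := by
          refine Finset.sum_congr rfl fun p _ => ?_
          rw [← sum_sign_pow l p, ← sum_sign_pow m p, mul_assoc, Finset.sum_mul_sum,
            Finset.mul_sum]
          refine Finset.sum_congr rfl fun A _ => ?_
          rw [Finset.mul_sum]
  rw [alg]
  -- final: restrict the range and match signs
  have hrange : Finset.range (k+1) = insert 0 (Finset.Icc 1 k) := by
    ext x
    simp only [Finset.mem_range, Finset.mem_insert, Finset.mem_Icc]
    constructor
    · intro h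
      rcases Nat.eq_zero_or_pos x with h0 | h0
      · exact Or.inl h0
      · exact Or.inr ⟨h0, Nat.lt_succ_iff.mp h⟩
    · rintro (rfl | ⟨h1, h2⟩)
      · exact Nat.succ_pos k
      · exact Nat.lt_succ_of_le h2
  have hs0 : (stirling1 k 0 : ℤ) = 0 := by
    obtain ⟨k', rfl⟩ := Nat.exists_eq_add_of_le hk
    norm_num [show stirling1 (1 + k') 0 = stirling1 (k' + 1) 0 from by rw [Nat.add_comm],
      show stirling1 (k' + 1) 0 = 0 from rfl]
  rw [hrange, Finset.sum_insert (by simp), hs0]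
  simp only [mul_zero, zero_mul, add_zero, pow_zero, mul_one, zero_add]
  rw [c, Finset.mul_sum]
  refine Finset.sum_congr rfl fun p hp => ?_
  obtain ⟨hp1, hpk⟩ := Finset.mem_Icc.1 hp
  have hsign : (-1:ℤ)^(k+p) = (-1:ℤ)^(k-p) := by
    rw [show k + p = (k - p) + 2 * p from by
      rw [two_mul, ← add_assoc, Nat.sub_add_cancel hpk], pow_add, pow_mul]
    norm_num
  rw [hsign]
  ring
end

section
/- The multivariable coefficients satisfy the recurrence: for all integers k ≥ 1, n ≥ 1, and every multi-index L = (l₁,…,lₙ) of nonnegative integers, c^{(k+1)}_{L+1} = ∑_{S ⊆ {1,…,n}} (∏_{i∈S} (l_i+1)) · c^{(k)}_{L+1_S} − k · c^{(k)}_{L+1}, where L+1 denotes (l₁+1,…,lₙ+1) and L+1_S denotes the multi-index whose i-th entry is l_i+1 for i ∈ S and l_i for i ∉ S. -/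
open Nat

/-- The multivariable coefficients
`c^(k)_L = ∑_{p=1}^k (-1)^(k-p) s(k,p) ∏_i S(p, l_i)`. -/
def cMulti (k : ℕ) {n : ℕ} (L : Fin n → ℕ) : ℤ :=
  ∑ p ∈ Finset.Icc 1 k,
    (-1 : ℤ) ^ (k - p) * (stirling1 k p : ℤ) * ∏ i, (stirling2 p (L i) : ℤ)

lemma stirling1_zero_of_lt : ∀ (n p : ℕ), n < p → stirling1 n p = 0 := by
  intro n
  induction n with
  | zero =>
    intro p hp
    match p, hp with
    | q + 1, _ => rfl
  | succ n ih =>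
    intro p hp
    match p, hp with
    | q + 1, hp =>
      show n * stirling1 n (q + 1) + stirling1 n q = 0
      rw [ih (q + 1) (by omega), ih q (by omega), mul_zero]

lemma sum_Icc_one (m : ℕ) (f : ℕ → ℤ) :
    ∑ p ∈ Finset.Icc 1 m, f p = ∑ j ∈ Finset.range m, f (j + 1) := by
  induction m with
  | zero => simp
  | succ m ih =>
    rw [Finset.sum_Icc_succ_top (by omega), ih, Finset.sum_range_succ]

lemma prod_expand {n : ℕ} (q : ℕ) (L : Fin n → ℕ) :
    (∏ i, (stirling2 (q + 1) (L i + 1) : ℤ)) =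
      ∑ S : Finset (Fin n), (∏ i ∈ S, ((L i : ℤ) + 1)) *
        ∏ i, (stirling2 q (if i ∈ S then L i + 1 else L i) : ℤ) := by
  have h : ∀ i, (stirling2 (q + 1) (L i + 1) : ℤ)
      = ((L i : ℤ) + 1) * (stirling2 q (L i + 1) : ℤ) + (stirling2 q (L i) : ℤ) := by
    intro i
    have : stirling2 (q + 1) (L i + 1)
        = (L i + 1) * stirling2 q (L i + 1) + stirling2 q (L i) := rfl
    rw [this]; push_cast; ring
  simp only [h]
  rw [Finset.prod_add, Finset.powerset_univ]
  refine Finset.sum_congr rfl fun S _ => ?_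
  rw [Finset.prod_mul_distrib, mul_assoc]
  congr 1
  rw [← Finset.prod_sdiff (Finset.subset_univ S), mul_comm]
  congr 1
  · exact Finset.prod_congr rfl fun i hi => by
      simp only [Finset.mem_sdiff] at hi
      simp [hi.2]
  · exact Finset.prod_congr rfl fun i hi => by simp [hi]

/-- The recurrence for the multivariable coefficients:
`c^(k+1)_{L+1} = ∑_{S ⊆ {1,…,n}} (∏_{i∈S} (l_i+1)) c^(k)_{L+1_S} − k c^(k)_{L+1}`. -/
theorem cMulti_recurrence (k n : ℕ) (hk : 1 ≤ k) (hn : 1 ≤ n) (L : Fin n → ℕ) :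
    cMulti (k + 1) (fun i => L i + 1) =
      (∑ S : Finset (Fin n),
          (∏ i ∈ S, ((L i : ℤ) + 1)) *
            cMulti k (fun i => if i ∈ S then L i + 1 else L i)) -
        (k : ℤ) * cMulti k (fun i => L i + 1) := by
  unfold cMulti
  simp only [sum_Icc_one]
  have key : ∀ j, (-1 : ℤ) ^ (k + 1 - (j + 1)) * (stirling1 (k + 1) (j + 1) : ℤ) *
        (∏ i, (stirling2 (j + 1) (L i + 1) : ℤ))
      = (-1 : ℤ) ^ (k - j) * ((k : ℤ) * (stirling1 k (j + 1) : ℤ)) *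
          (∏ i, (stirling2 (j + 1) (L i + 1) : ℤ))
        + (-1 : ℤ) ^ (k - j) * (stirling1 k j : ℤ) *
          (∏ i, (stirling2 (j + 1) (L i + 1) : ℤ)) := by
    intro j
    have h1 : stirling1 (k + 1) (j + 1) = k * stirling1 k (j + 1) + stirling1 k j := rfl
    have h2 : k + 1 - (j + 1) = k - j := by omega
    rw [h1, h2]; push_cast; ring
  rw [Finset.sum_congr rfl fun j _ => key j, Finset.sum_add_distrib]
  have hA : (∑ j ∈ Finset.range (k + 1),
        (-1 : ℤ) ^ (k - j) * ((k : ℤ) * (stirling1 k (j + 1) : ℤ)) *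
          (∏ i, (stirling2 (j + 1) (L i + 1) : ℤ)))
      = -((k : ℤ) * ∑ j ∈ Finset.range k,
          (-1 : ℤ) ^ (k - (j + 1)) * (stirling1 k (j + 1) : ℤ) *
            (∏ i, (stirling2 (j + 1) (L i + 1) : ℤ))) := by
    rw [Finset.sum_range_succ, stirling1_zero_of_lt k (k + 1) (by omega)]
    push_cast
    simp only [mul_zero, zero_mul, add_zero]
    rw [Finset.mul_sum, ← Finset.sum_neg_distrib]
    refine Finset.sum_congr rfl fun j hj => ?_
    have hjk : j < k := Finset.mem_range.mp hj
    have : k - j = (k - (j + 1)) + 1 := by omega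
    rw [this, pow_succ]; ring
  have hB : (∑ j ∈ Finset.range (k + 1),
        (-1 : ℤ) ^ (k - j) * (stirling1 k j : ℤ) *
          (∏ i, (stirling2 (j + 1) (L i + 1) : ℤ)))
      = ∑ S : Finset (Fin n),
          (∏ i ∈ S, ((L i : ℤ) + 1)) *
            ∑ j ∈ Finset.range k,
              (-1 : ℤ) ^ (k - (j + 1)) * (stirling1 k (j + 1) : ℤ) *
                ∏ i, (stirling2 (j + 1) (if i ∈ S then L i + 1 else L i) : ℤ) := by
    rw [Finset.sum_range_succ']
    have hk0 : stirling1 k 0 = 0 := by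
      match k, hk with
      | m + 1, _ => rfl
    rw [hk0]
    push_cast
    simp only [mul_zero, zero_mul, add_zero]
    have expand : ∀ j ∈ Finset.range k,
        (-1 : ℤ) ^ (k - (j + 1)) * (stirling1 k (j + 1) : ℤ) *
          (∏ i, (stirling2 (j + 1 + 1) (L i + 1) : ℤ))
        = ∑ S : Finset (Fin n),
            (∏ i ∈ S, ((L i : ℤ) + 1)) *
              ((-1 : ℤ) ^ (k - (j + 1)) * (stirling1 k (j + 1) : ℤ) *
                ∏ i, (stirling2 (j + 1) (if i ∈ S then L i + 1 else L i) : ℤ)) := by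
      intro j _
      rw [prod_expand (j + 1) L, Finset.mul_sum]
      exact Finset.sum_congr rfl fun S _ => by ring
    rw [Finset.sum_congr rfl expand, Finset.sum_comm]
    exact Finset.sum_congr rfl fun S _ => by rw [Finset.mul_sum]
  rw [hA, hB]
  ring
end

section
/- For integers k ≥ 1, n ≥ 1 and a multi-index L = (l₁,…,lₙ) with 1 ≤ l_i ≤ k for each i and max_i l_i ≤ k ≤ ∏_i l_i, the number of injective functions f from {1,…,k} to the product set {1,…,l₁} × ⋯ × {1,…,lₙ} such that for every coordinate i, every value in {1,…,l_i} occurs as the i-th coordinate of some element of the image of f, equals (∏_{i=1}^{n} l_i!) · c^{(k)}_L. -/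
/-!
Group the maps `Fin p → B`, `B = ∏ᵢ Fin lᵢ`, by their image `t`: the maps with image `t` are
the surjections onto `t`, counted by `|t|! S(p, |t|)`, while the maps covering every slice are
tuples of surjections onto the coordinates, counted by `∏ᵢ lᵢ! S(p, lᵢ)`. An alternating sum
against `s(k, p)` turns `S(p, |t|)` into `δ_{k |t|}` (orthogonality of the Stirling numbers), so it
keeps exactly the images of size `k`, i.e. the injective maps.
-/

open Nat

open Finset Function

namespace Nat

def signedStirlingFirst (n k : ℕ) : ℤ := (-1) ^ (n + k) * stirlingFirst n k

@[simp]
theorem signedStirlingFirst_succ_zero (n : ℕ) : signedStirlingFirst (n + 1) 0 = 0 := by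
  simp [signedStirlingFirst]

theorem signedStirlingFirst_eq_zero_of_lt {n k : ℕ} (h : n < k) :
    signedStirlingFirst n k = 0 := by
  simp [signedStirlingFirst, stirlingFirst_eq_zero_of_lt h]

theorem signedStirlingFirst_succ_succ (n k : ℕ) :
    signedStirlingFirst (n + 1) (k + 1) =
      signedStirlingFirst n k - n * signedStirlingFirst n (k + 1) := by
  simp only [signedStirlingFirst, stirlingFirst_succ_succ, pow_succ, cast_add, cast_mul,
    show n + 1 + (k + 1) = n + k + 2 by ring, show n + (k + 1) = n + k + 1 by ring]
  ring

theorem sum_signedStirlingFirst_mul_stirlingSecond (n k : ℕ) :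
    ∑ p ∈ range (n + 1), signedStirlingFirst n p * stirlingSecond p k =
      if k = n then 1 else 0 := by
  induction n generalizing k with
  | zero => cases k <;> simp [signedStirlingFirst]
  | succ n ih =>
    have ih' (k : ℕ) : ∑ p ∈ range (n + 2), signedStirlingFirst n p * stirlingSecond p k =
        if k = n then 1 else 0 := by
      rw [sum_range_succ, ih, signedStirlingFirst_eq_zero_of_lt n.lt_succ_self, zero_mul, add_zero]
    have hshift (k : ℕ) :
        n * ∑ p ∈ range (n + 1), signedStirlingFirst n (p + 1) * stirlingSecond (p + 1) k =
          n * if k = n then 1 else 0 := by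
      -- the extra term `n * signedStirlingFirst n 0 * _` vanishes for every `n`
      rw [← ih' k, sum_range_succ' _ (n + 1), mul_add]
      rcases n with _ | n <;> simp
    rw [sum_range_succ', signedStirlingFirst_succ_zero, zero_mul, add_zero]
    simp only [signedStirlingFirst_succ_succ, sub_mul, sum_sub_distrib, mul_assoc, ← mul_sum,
      hshift]
    rcases k with _ | k
    · simp only [stirlingSecond_succ_zero, cast_zero, mul_zero, sum_const_zero]
      split_ifs <;> simp_all
    · simp only [stirlingSecond_succ_succ, cast_add, cast_mul, cast_one, mul_add, sum_add_distrib,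
        mul_left_comm _ ((k : ℤ) + 1), ← mul_sum, ih]
      split_ifs <;> omega

end Nat

theorem Set.compl_singleton_subset_iff {β : Type*} {r : Set β} {v : β} :
    {v}ᶜ ⊆ r ↔ r = Set.univ ∨ r = {v}ᶜ := by
  rw [Set.compl_subset_comm, Set.subset_singleton_iff_eq, Set.compl_empty_iff, compl_eq_comm]
  exact or_congr_right eq_comm

section Surjections

variable {α β : Type*}

def rangeEqEquivSurjective (s : Set β) :
    {f : α → β // Set.range f = s} ≃ {g : α → s // Surjective g} where
  toFun f := ⟨fun a => ⟨f.1 a, f.2.subset (Set.mem_range_self a)⟩, fun b => by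
      obtain ⟨a, ha⟩ : (b : β) ∈ Set.range f.1 := f.2.symm.subset b.2
      exact ⟨a, Subtype.ext ha⟩⟩
  invFun g := ⟨fun a => g.1 a, by
    rw [Set.range_comp', g.2.range_eq, Set.image_univ, Subtype.range_coe]⟩
  left_inv _ := rfl
  right_inv _ := rfl

theorem Fin.surjective_iff_compl_subset_range_tail {p : ℕ} (f : Fin (p + 1) → β) :
    Surjective f ↔ {f 0}ᶜ ⊆ Set.range (Fin.tail f) := by
  simp [Surjective, Fin.exists_fin_succ, Set.subset_def, Fin.tail, or_iff_not_imp_left, eq_comm]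

noncomputable def complSingletonSubsetRangeEquiv (v : β) :
    {g : α → β // {v}ᶜ ⊆ Set.range g} ≃
      {g : α → β // Surjective g} ⊕ {g : α → ({v}ᶜ : Set β) // Surjective g} := by
  classical
  refine (Equiv.subtypeEquivRight fun g => ?_).trans
    ((subtypeOrEquiv _ _ ?_).trans (Equiv.sumCongr (Equiv.refl _) (rangeEqEquivSurjective _)))
  · rw [Set.compl_singleton_subset_iff, Set.range_eq_univ]
  · refine Pi.disjoint_iff.2 fun g => disjoint_iff_inf_le.2 ?_
    rintro ⟨hg, hrange⟩
    have hv : v ∈ Set.range g := hg v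
    exact (hrange ▸ hv : v ∈ ({v}ᶜ : Set β)) rfl

theorem card_surjective_fin_succ [Fintype β] (p : ℕ) :
    Nat.card {f : Fin (p + 1) → β // Surjective f} =
      ∑ v : β, (Nat.card {g : Fin p → β // Surjective g} +
        Nat.card {g : Fin p → ({v}ᶜ : Set β) // Surjective g}) := by
  classical
  have hcons : {f : Fin (p + 1) → β // Surjective f} ≃
      Σ v : β, {g : Fin p → β // {v}ᶜ ⊆ Set.range g} :=
    ((Fin.consEquiv fun _ => β).symm.subtypeEquiv fun f =>
      Fin.surjective_iff_compl_subset_range_tail f).trans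
      (Equiv.subtypeProdEquivSigmaSubtype fun v g => {v}ᶜ ⊆ Set.range g)
  rw [Nat.card_congr hcons, Nat.card_sigma]
  exact sum_congr rfl fun v _ => by
    rw [Nat.card_congr (complSingletonSubsetRangeEquiv v), Nat.card_sum]

theorem card_surjective_fin (p : ℕ) (β : Type*) [Finite β] :
    Nat.card {f : Fin p → β // Surjective f} =
      (Nat.card β)! * stirlingSecond p (Nat.card β) := by
  induction p generalizing β with
  | zero =>
    rcases (Nat.card β).eq_zero_or_pos with hβ | hβ
    · have : IsEmpty β := Finite.card_eq_zero_iff.mp hβ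
      have : Unique {f : Fin 0 → β // Surjective f} :=
        ⟨⟨⟨finZeroElim, isEmptyElim⟩⟩, fun f => Subtype.ext (Subsingleton.elim _ _)⟩
      simp
    · obtain ⟨b⟩ := Nat.card_pos_iff.mp hβ |>.1
      have : IsEmpty {f : Fin 0 → β // Surjective f} :=
        ⟨fun f => (f.2 b).elim fun j _ => j.elim0⟩
      simp [stirlingSecond_eq_zero_of_lt hβ]
  | succ p ih =>
    classical
    have := Fintype.ofFinite β
    have hcompl (v : β) : Nat.card ({v}ᶜ : Set β) = Nat.card β - 1 := by
      rw [Nat.card_coe_set_eq, Set.ncard_compl, Set.ncard_singleton]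
    simp only [card_surjective_fin_succ, ih, hcompl, sum_const, Finset.card_univ, smul_eq_mul,
      ← Nat.card_eq_fintype_card]
    rcases Nat.card β with _ | q
    · simp
    · simp only [factorial_succ, add_tsub_cancel_right, stirlingSecond_succ_succ]
      ring

end Surjections

section Images

variable {B : Type*} [Fintype B] [DecidableEq B]

theorem card_fun_fin_image_eq_sum (p : ℕ) (P : Finset B → Prop) [DecidablePred P] :
    Nat.card {f : Fin p → B // P (univ.image f)} =
      ∑ t ∈ univ.filter P, (#t)! * stirlingSecond p #t := by
  have hfiber (t : Finset B) :
      Nat.card {f : Fin p → B // univ.image f = t} = (#t)! * stirlingSecond p #t := by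
    have e : {f : Fin p → B // univ.image f = t} ≃
        {g : Fin p → (t : Set B) // Surjective g} :=
      (Equiv.subtypeEquivRight fun f => by
        rw [← coe_inj, coe_image, coe_univ, Set.image_univ]).trans (rangeEqEquivSurjective _)
    rw [Nat.card_congr e, card_surjective_fin, Nat.card_coe_set_eq, Set.ncard_coe_finset]
  rw [Nat.card_eq_fintype_card, Fintype.card_subtype,
    card_eq_sum_card_fiberwise (f := fun f => univ.image f) (t := univ.filter P)
      fun f hf => by simpa using hf]
  refine sum_congr rfl fun t ht => ?_
  rw [← hfiber, Nat.card_eq_fintype_card, Fintype.card_subtype, filter_filter]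
  congr 1
  refine filter_congr fun f _ => ?_
  simp only [mem_filter, mem_univ, true_and] at ht
  exact ⟨And.right, fun h => ⟨h ▸ ht, h⟩⟩

theorem card_injective_image_eq_sum_signedStirlingFirst (k : ℕ) (P : Finset B → Prop)
    [DecidablePred P] :
    (Nat.card {f : Fin k → B // Injective f ∧ P (univ.image f)} : ℤ) =
      ∑ p ∈ range (k + 1),
        signedStirlingFirst k p * Nat.card {f : Fin p → B // P (univ.image f)} := by
  have hinj : {f : Fin k → B // Injective f ∧ P (univ.image f)} ≃
      {f : Fin k → B // P (univ.image f) ∧ #(univ.image f) = k} :=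
    Equiv.subtypeEquivRight fun f => by
      rw [and_comm, ← Set.injOn_univ, ← coe_univ, ← card_image_iff, Finset.card_univ,
        Fintype.card_fin]
  calc (Nat.card {f : Fin k → B // Injective f ∧ P (univ.image f)} : ℤ)
      = ∑ t ∈ univ.filter P, if #t = k then ((#t)! : ℤ) else 0 := by
        rw [Nat.card_congr hinj, card_fun_fin_image_eq_sum k fun t => P t ∧ #t = k,
          ← filter_filter, sum_filter]
        push_cast
        refine sum_congr rfl fun t _ => ?_
        split_ifs with h
        · rw [h, stirlingSecond_self, cast_one, mul_one]
        · rfl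
    _ = ∑ t ∈ univ.filter P,
          ((#t)! : ℤ) *
            ∑ p ∈ range (k + 1), signedStirlingFirst k p * stirlingSecond p #t := by
        simp_rw [sum_signedStirlingFirst_mul_stirlingSecond, mul_ite, mul_one, mul_zero]
    _ = _ := by
        simp_rw [card_fun_fin_image_eq_sum, cast_sum, cast_mul, mul_sum]
        rw [sum_comm]
        exact sum_congr rfl fun p _ => sum_congr rfl fun t _ => by ring

end Images

def surjectiveCoordsEquiv {α ι : Type*} {β : ι → Type*} :
    {f : α → ∀ i, β i // ∀ i, Surjective fun a => f a i} ≃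
      ∀ i, {g : α → β i // Surjective g} :=
  (Equiv.subtypeEquiv (Equiv.piComm fun _ i => β i) fun _ => Iff.rfl).trans
    Equiv.subtypePiEquivPi

theorem stirling1_eq_stirlingFirst : stirling1 = Nat.stirlingFirst := by
  funext n k
  induction n generalizing k <;> cases k <;> simp_all [stirling1, Nat.stirlingFirst]

theorem stirling2_eq_stirlingSecond : stirling2 = Nat.stirlingSecond := by
  funext n k
  induction n generalizing k <;> cases k <;> simp_all [stirling2, Nat.stirlingSecond]

theorem cMulti_eq_sum_range {k : ℕ} (hk : 1 ≤ k) {n : ℕ} (L : Fin n → ℕ) :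
    cMulti k L = ∑ p ∈ range (k + 1),
      signedStirlingFirst k p * ∏ i, (stirlingSecond p (L i) : ℤ) := by
  rw [cMulti, stirling1_eq_stirlingFirst, stirling2_eq_stirlingSecond]
  refine sum_subset_zero_on_sdiff (fun p hp => ?_) (fun p hp => ?_) (fun p hp => ?_)
  · simp only [mem_Icc, mem_range] at hp ⊢
    omega
  · obtain rfl : p = 0 := by simp only [mem_sdiff, mem_Icc, mem_range] at hp; omega
    obtain ⟨k, rfl⟩ := Nat.exists_eq_add_of_le' hk
    simp
  · rw [signedStirlingFirst, show k + p = k - p + 2 * p by simp at hp; omega, pow_add, pow_mul]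
    simp

theorem multi_conjoint_ranking_count_general (k n : ℕ) (hk : 1 ≤ k)
    (L : Fin n → ℕ) :
    (Nat.card {f : Fin k → (∀ i, Fin (L i)) //
        Function.Injective f ∧ ∀ (i : Fin n) (a : Fin (L i)), ∃ j, f j i = a} : ℤ) =
      (∏ i, ((L i)! : ℤ)) * cMulti k L := by
  classical
  let covers (t : Finset (∀ i, Fin (L i))) : Prop := ∀ i a, ∃ b ∈ t, b i = a
  have hcovers {p : ℕ} (f : Fin p → ∀ i, Fin (L i)) :
      covers (univ.image f) ↔ ∀ (i : Fin n) (a : Fin (L i)), ∃ j, f j i = a := by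
    simp [covers]
  have hcount (p : ℕ) : Nat.card {f : Fin p → ∀ i, Fin (L i) // covers (univ.image f)} =
      ∏ i, (L i)! * stirlingSecond p (L i) := by
    rw [Nat.card_congr ((Equiv.subtypeEquivRight hcovers).trans surjectiveCoordsEquiv),
      Nat.card_pi]
    exact prod_congr rfl fun i _ => by rw [card_surjective_fin, Nat.card_fin]
  rw [Nat.card_congr (Equiv.subtypeEquivRight fun f => and_congr_right' (hcovers f).symm),
    card_injective_image_eq_sum_signedStirlingFirst, cMulti_eq_sum_range hk, mul_sum]
  refine sum_congr rfl fun p _ => ?_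
  rw [hcount, mul_left_comm, ← prod_mul_distrib]
  push_cast
  ring

/-- The number of `n`-dimensional `k`-conjoint ranking tables of size `l₁ × ⋯ × lₙ`
is `(∏_i l_i!) · c^(k)_L`: such a table is an injective placement of `1,…,k` in the
cells of the array hitting every slice in every dimension. -/
theorem multi_conjoint_ranking_count (k n : ℕ) (hk : 1 ≤ k) (hn : 1 ≤ n)
    (L : Fin n → ℕ) (hL : ∀ i, 1 ≤ L i) (hmax : ∀ i, L i ≤ k) (hprod : k ≤ ∏ i, L i) :
    (Nat.card {f : Fin k → (∀ i, Fin (L i)) //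
        Function.Injective f ∧ ∀ (i : Fin n) (a : Fin (L i)), ∃ j, f j i = a} : ℤ) =
      (∏ i, ((L i)! : ℤ)) * cMulti k L :=
  multi_conjoint_ranking_count_general k n hk L
end
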